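/- arXiv:1303.4701 — 6 statements merged into one kernel-verified Lean document; each statement's English description precedes it below -/
import Mathlib

section
/- Let n ≥ 2 be an integer and let α be a real number with 0 ≤ α < n − 2 that is not an integer. Then there exists an n×n doubly nonnegative matrix A such that A^α (defined by the functional calculus) is not doubly nonnegative. -/
/-!
Take `A = 1 + t • B` with `B` the adjacency matrix of the path on `n` vertices and `t > 0` small;
such an `A` is doubly nonnegative. Put `m = ⌈α⌉₊`. Walks in the path show that `(B ^ k) 0 (m + 1)`
vanishes for `k ≤ m` and is positive for `k = m + 1`, so the binomial series
`(1 + t • B) ^ α = ∑ₖ (α choose k) tᵏ Bᵏ` gives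
`((1 + t • B) ^ α) 0 (m + 1) = (α choose (m + 1)) (B ^ (m + 1)) 0 (m + 1) t ^ (m + 1) + O(t ^ (m + 2))`.
As `α` is not a natural number, exactly the last factor `α - m` of `α (α - 1) ⋯ (α - m)` is
negative, so this entry is negative for small `t`.
-/

open Matrix Filter Set Topology

/-- Functional calculus for real symmetric matrices: apply `f` to the eigenvalues
in a spectral decomposition `A = U D Uᵀ`. -/
noncomputable def matFun {n : ℕ} (f : ℝ → ℝ) (A : Matrix (Fin n) (Fin n) ℝ) :
    Matrix (Fin n) (Fin n) ℝ :=
  if hA : A.IsHermitian then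
    (hA.eigenvectorUnitary : Matrix (Fin n) (Fin n) ℝ) *
      Matrix.diagonal (fun i => f (hA.eigenvalues i)) *
      (hA.eigenvectorUnitary : Matrix (Fin n) (Fin n) ℝ)ᴴ
  else 0

/-- A real matrix is doubly nonnegative if it is (symmetric) positive semidefinite
with all entries nonnegative. -/
def DN {n : ℕ} (A : Matrix (Fin n) (Fin n) ℝ) : Prop :=
  A.PosSemidef ∧ ∀ i j, 0 ≤ A i j

open Asymptotics Finset

lemma Ring.choose_eq_prod_range_div {R : Type*} [Field R] [CharZero R] (a : R) (k : ℕ) :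
    Ring.choose a k = (∏ j ∈ range k, (a - j)) / k.factorial := by
  rw [Ring.choose_eq_smul, ← Polynomial.aeval_eq_smeval, Polynomial.aeval_def,
    Polynomial.eval₂_eq_eval_map, descPochhammer_map, descPochhammer_eval_eq_prod_range,
    smul_eq_mul, inv_mul_eq_div]

lemma Ring.choose_ceil_add_one_neg {a : ℝ} (ha : ∀ m : ℕ, a ≠ m) :
    Ring.choose a (⌈a⌉₊ + 1) < 0 := by
  rw [Ring.choose_eq_prod_range_div, prod_range_succ]
  refine div_neg_of_neg_of_pos (mul_neg_of_pos_of_neg (prod_pos fun j hj => ?_) ?_) (by positivity)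
  · exact sub_pos.2 (Nat.lt_ceil.1 (mem_range.1 hj))
  · exact sub_neg.2 ((Nat.le_ceil a).lt_of_ne (ha _))

lemma one_add_mul_rpow_sub_sum_isBigO (α μ : ℝ) (K : ℕ) :
    (fun t : ℝ => (1 + t * μ) ^ α - ∑ p ∈ range K, Ring.choose α p * μ ^ p * t ^ p)
      =O[𝓝 0] (fun t => t ^ K) := by
  have h := (Real.one_add_rpow_hasFPowerSeriesAt_zero (a := α)).isBigO_sub_partialSum_pow K
  have hlin : Tendsto (fun t : ℝ => t * μ) (𝓝 0) (𝓝 0) := by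
    simpa using (continuous_mul_const μ).tendsto 0
  refine ((h.comp_tendsto hlin).trans ?_).congr_left fun t => ?_
  · simpa [Function.comp_def, abs_mul, mul_pow, mul_comm] using
      (isBigO_refl (fun t : ℝ => t ^ K) (𝓝 0)).norm_left.const_mul_left (‖μ‖ ^ K)
  · simp [FormalMultilinearSeries.partialSum, binomialSeries,
      FormalMultilinearSeries.coeff_ofScalars, mul_pow, mul_assoc, mul_left_comm, mul_comm]

lemma eventually_neg_of_sub_const_mul_pow_isBigO {g : ℝ → ℝ} {C : ℝ} {k : ℕ} (hC : C < 0)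
    (h : (fun t => g t - C * t ^ k) =O[𝓝 0] (fun t => t ^ (k + 1))) :
    ∀ᶠ t in 𝓝[>] 0, g t < 0 := by
  have hbound := (h.trans_isLittleO (isLittleO_pow_pow k.lt_succ_self)).def
    (c := -C / 2) (by linarith)
  filter_upwards [hbound.filter_mono nhdsWithin_le_nhds, self_mem_nhdsWithin] with t ht htpos
  have htk : 0 < t ^ k := pow_pos htpos k
  rw [Real.norm_eq_abs, Real.norm_eq_abs, abs_of_pos htk] at ht
  nlinarith [(abs_le.1 ht).2]

lemma matFun_eq_cfc {n : ℕ} (f : ℝ → ℝ) {A : Matrix (Fin n) (Fin n) ℝ} (hA : A.IsHermitian) :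
    matFun f A = cfc f A := by
  rw [hA.cfc_eq, matFun, dif_pos hA, IsHermitian.cfc, Unitary.conjStarAlgAut_apply]
  rfl

namespace Matrix.IsHermitian

variable {ι : Type*} [Fintype ι] [DecidableEq ι] {B : Matrix ι ι ℝ}

lemma cfc_apply_eq_sum (hB : B.IsHermitian) (f : ℝ → ℝ) (i j : ι) :
    cfc f B i j = ∑ k, hB.eigenvectorUnitary i k * hB.eigenvectorUnitary j k *
      f (hB.eigenvalues k) := by
  rw [hB.cfc_eq, IsHermitian.cfc, Unitary.conjStarAlgAut_apply, mul_apply]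
  simp [mul_diagonal, mul_right_comm]

lemma one_add_smul_eq_cfc (hB : B.IsHermitian) (t : ℝ) :
    1 + t • B = cfc (fun x => 1 + t * x) B := by
  rw [cfc_const_add _ _ _ (by fun_prop) hB.isSelfAdjoint, cfc_const_mul_id _ _ hB.isSelfAdjoint,
    map_one]

lemma cfc_rpow_one_add_smul (hB : B.IsHermitian) (α t : ℝ) :
    cfc (fun x : ℝ => x ^ α) (1 + t • B) = cfc (fun x => (1 + t * x) ^ α) B := by
  rw [hB.one_add_smul_eq_cfc, ← cfc_comp' _ _ _ ((Set.toFinite _).continuousOn _) (by fun_prop)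
    hB.isSelfAdjoint]

open scoped MatrixOrder in
lemma eventually_posSemidef_one_add_smul (hB : B.IsHermitian) :
    ∀ᶠ t in 𝓝 (0 : ℝ), (1 + t • B).PosSemidef := by
  have hspec : ∀ᶠ t in 𝓝 (0 : ℝ), ∀ x ∈ spectrum ℝ B, 0 < 1 + t * x :=
    (eventually_all_finite (Set.toFinite _)).2 fun x _ =>
      (tendsto_const_nhds.add (tendsto_id.mul_const x)).eventually_const_lt (by simp)
  filter_upwards [hspec] with t ht
  rw [← nonneg_iff_posSemidef, hB.one_add_smul_eq_cfc]
  exact cfc_nonneg fun x hx => (ht x hx).le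

lemma cfc_one_add_mul_rpow_apply_sub_sum_isBigO (hB : B.IsHermitian) (α : ℝ) (K : ℕ) (i j : ι) :
    (fun t : ℝ => cfc (fun x => (1 + t * x) ^ α) B i j -
        ∑ p ∈ range K, Ring.choose α p * (B ^ p) i j * t ^ p) =O[𝓝 0] (fun t => t ^ K) := by
  set V := (hB.eigenvectorUnitary : Matrix ι ι ℝ)
  have hpow : ∀ p : ℕ, (B ^ p) i j = ∑ k, V i k * V j k * hB.eigenvalues k ^ p := fun p => by
    rw [← cfc_pow_id (R := ℝ) B p hB.isSelfAdjoint, cfc_apply_eq_sum]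
  refine (IsBigO.fun_sum (s := univ) fun k _ =>
    (one_add_mul_rpow_sub_sum_isBigO α (hB.eigenvalues k) K).const_mul_left
      (V i k * V j k)).congr_left fun t => ?_
  rw [cfc_apply_eq_sum hB]
  simp only [hpow, mul_sub, sum_sub_distrib, mul_sum]
  congr 1
  rw [sum_comm]
  refine sum_congr rfl fun p _ => ?_
  rw [sum_mul]
  exact sum_congr rfl fun k _ => by ring

lemma eventually_cfc_one_add_mul_rpow_apply_neg (hB : B.IsHermitian) {α : ℝ} {m : ℕ} {i j : ι}
    (hα : Ring.choose α (m + 1) < 0) (hzero : ∀ p ≤ m, (B ^ p) i j = 0)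
    (hpos : 0 < (B ^ (m + 1)) i j) :
    ∀ᶠ t in 𝓝[>] (0 : ℝ), cfc (fun x => (1 + t * x) ^ α) B i j < 0 := by
  refine eventually_neg_of_sub_const_mul_pow_isBigO (mul_neg_of_neg_of_pos hα hpos) <|
    (hB.cfc_one_add_mul_rpow_apply_sub_sum_isBigO α (m + 2) i j).congr_left fun t => ?_
  have hlow : ∑ p ∈ range (m + 1), Ring.choose α p * (B ^ p) i j * t ^ p = 0 :=
    sum_eq_zero fun p hp => by rw [hzero p (Nat.lt_succ_iff.1 (mem_range.1 hp))]; ring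
  rw [sum_range_succ, hlow]
  ring

end Matrix.IsHermitian

lemma eventually_DN_one_add_smul {n : ℕ} {B : Matrix (Fin n) (Fin n) ℝ} (hB : B.IsHermitian)
    (hB0 : ∀ i j, 0 ≤ B i j) : ∀ᶠ t in 𝓝[>] (0 : ℝ), DN (1 + t • B) := by
  filter_upwards [hB.eventually_posSemidef_one_add_smul.filter_mono nhdsWithin_le_nhds,
    self_mem_nhdsWithin] with t hpsd (ht : 0 < t)
  refine ⟨hpsd, fun i j => ?_⟩
  rw [Matrix.add_apply, Matrix.smul_apply, smul_eq_mul, one_apply]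
  have := hB0 i j
  split_ifs <;> positivity

namespace SimpleGraph

lemma pathGraph_val_le_add_length {n : ℕ} {u v : Fin n} (w : (pathGraph n).Walk u v) :
    (v : ℕ) ≤ u + w.length := by
  induction w with
  | nil => simp
  | cons h _ ih => rw [pathGraph_adj] at h; rw [Walk.length_cons]; omega

lemma pathGraph_exists_walk_length (n : ℕ) (u : Fin n) :
    ∀ k (hk : (u : ℕ) + k < n), ∃ w : (pathGraph n).Walk u ⟨u + k, hk⟩, w.length = k
  | 0, _ => ⟨Walk.nil.copy rfl (Fin.ext rfl), rfl⟩
  | k + 1, hk => by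
    obtain ⟨w, hw⟩ := pathGraph_exists_walk_length n u k (by omega)
    exact ⟨w.concat (pathGraph_adj.2 (Or.inl rfl)), by rw [Walk.length_concat, hw]⟩

variable {R : Type*} [Semiring R] {n p : ℕ} [DecidableRel (pathGraph n).Adj] {u v : Fin n}

lemma pathGraph_adjMatrix_pow_apply_eq_zero (h : (u : ℕ) + p < v) :
    ((pathGraph n).adjMatrix R ^ p) u v = 0 := by
  have : IsEmpty {w : (pathGraph n).Walk u v | w.length = p} :=
    ⟨fun ⟨w, (hw : w.length = p)⟩ => by have := pathGraph_val_le_add_length w; omega⟩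
  rw [adjMatrix_pow_apply_eq_card_walk, Fintype.card_eq_zero, Nat.cast_zero]

lemma pathGraph_adjMatrix_pow_apply_pos [PartialOrder R] [IsOrderedRing R] [Nontrivial R]
    (h : (u : ℕ) + p = v) : 0 < ((pathGraph n).adjMatrix R ^ p) u v := by
  obtain ⟨w, hw⟩ := pathGraph_exists_walk_length n u p (h ▸ v.2)
  rw [adjMatrix_pow_apply_eq_card_walk, Nat.cast_pos, Fintype.card_pos_iff]
  exact ⟨⟨w.copy rfl (Fin.ext h), by simpa using hw⟩⟩

end SimpleGraph

theorem stmt_2_general (n : ℕ) (hn : 2 ≤ n) (α : ℝ) (hαn : α < (n : ℝ) - 2)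
    (hαint : ∀ m : ℕ, α ≠ m) :
    ∃ A : Matrix (Fin n) (Fin n) ℝ, DN A ∧ ¬ DN (matFun (fun x => x ^ α) A) := by
  classical
  set m := ⌈α⌉₊
  have hm : m + 1 < n := by
    have : m ≤ n - 2 := Nat.ceil_le.2 (by rw [Nat.cast_sub hn]; exact hαn.le)
    omega
  let B := (SimpleGraph.pathGraph n).adjMatrix ℝ
  have hB : B.IsHermitian := SimpleGraph.isHermitian_adjMatrix _ _
  have hB0 : ∀ a b, 0 ≤ B a b := fun a b => by
    simp only [B, SimpleGraph.adjMatrix_apply]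
    split_ifs <;> norm_num
  let i : Fin n := ⟨0, by omega⟩
  let j : Fin n := ⟨m + 1, hm⟩
  have hneg := hB.eventually_cfc_one_add_mul_rpow_apply_neg (i := i) (j := j)
    (Ring.choose_ceil_add_one_neg hαint)
    (fun p hp => SimpleGraph.pathGraph_adjMatrix_pow_apply_eq_zero (by simp [i, j]; omega))
    (SimpleGraph.pathGraph_adjMatrix_pow_apply_pos (by simp [i, j, m]))
  obtain ⟨t, hA, hentry⟩ := ((eventually_DN_one_add_smul hB hB0).and hneg).exists
  refine ⟨1 + t • B, hA, fun hDN => (hDN.2 i j).not_gt ?_⟩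
  rwa [matFun_eq_cfc _ hA.1.isHermitian, hB.cfc_rpow_one_add_smul]

theorem stmt_2 (n : ℕ) (hn : 2 ≤ n) (α : ℝ) (hα0 : 0 ≤ α) (hαn : α < (n : ℝ) - 2)
    (hαint : ∀ m : ℕ, α ≠ m) :
    ∃ A : Matrix (Fin n) (Fin n) ℝ, DN A ∧ ¬ DN (matFun (fun x => x ^ α) A) :=
  stmt_2_general n hn α hαn hαint
end

section
/- For all real numbers α, β, all u > 0, all x > 0, and every nonnegative integer r, the r-th derivative of the function x ↦ x^α (x + u)^{−β} is given by (d^r/dx^r)[x^α (x+u)^{−β}] = x^{α−r} (x+u)^{−(β+r)} · Σ_{i=0}^{r} C(r,i) u^i x^{r−i} (∏_{j=0}^{i−1} (α − j)) (∏_{j=i}^{r−1} (α − β − j)), where C(r,i) is the binomial coefficient and empty products equal 1. -/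
open Matrix Filter Set Topology

/-!
Write the `r`-th derivative as `x ^ (α - r) * (x + u) ^ (-(β + r)) * P_r(x)`. Differentiating
once more gives the recurrence `P_{r+1} = x (x + u) P_r' + ((α - r)(x + u) - (β + r) x) P_r`,
and on the coefficients `c_{r,i}` of `u ^ i x ^ (r - i)` in `P_r` this becomes the Pascal-type rule
`c_{r+1,i+1} = (α - β - r - i - 1) c_{r,i+1} + (α - i) c_{r,i}`, which the closed form
`C(r,i) ∏_{j<i} (α - j) ∏_{i≤j<r} (α - β - j)` satisfies because
`(i + 1) C(r,i+1) = (r - i) C(r,i)`.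
-/

namespace RpowMulRpow

noncomputable def coeff (α β : ℝ) (r i : ℕ) : ℝ :=
  r.choose i * (∏ j ∈ Finset.range i, (α - j)) * ∏ j ∈ Finset.Ico i r, (α - β - j)

noncomputable def poly (α β u : ℝ) (r : ℕ) (x : ℝ) : ℝ :=
  ∑ i ∈ Finset.range (r + 1), coeff α β r i * u ^ i * x ^ (r - i)

variable {α β : ℝ}

lemma coeff_of_lt {r i : ℕ} (h : r < i) : coeff α β r i = 0 := by
  simp [coeff, Nat.choose_eq_zero_of_lt h]

lemma coeff_succ_zero (r : ℕ) : coeff α β (r + 1) 0 = (α - β - r) * coeff α β r 0 := by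
  simp only [coeff, Nat.choose_zero_right, Finset.range_zero, Finset.prod_empty,
    ← Finset.range_eq_Ico, Finset.prod_range_succ]
  ring

lemma coeff_succ_succ {r i : ℕ} (hi : i ≤ r) :
    coeff α β (r + 1) (i + 1) =
      (α - β - r - (i + 1)) * coeff α β r (i + 1) + (α - i) * coeff α β r i := by
  obtain rfl | hlt := hi.eq_or_lt
  · simp [coeff, Finset.prod_range_succ]
    ring
  have hchoose : ((r.choose (i + 1) : ℕ) : ℝ) * (i + 1) = r.choose i * (r - i) := by
    rw [← Nat.cast_sub hi, ← Nat.cast_succ]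
    exact_mod_cast Nat.choose_succ_right_eq r i
  simp only [coeff, Nat.choose_succ_succ, Nat.cast_add, Finset.prod_range_succ,
    Finset.prod_eq_prod_Ico_succ_bot hlt, Finset.prod_Ico_succ_top (Nat.succ_le_of_lt hlt)]
  linear_combination ((α - i) * (∏ j ∈ Finset.range i, (α - j)) *
    ∏ j ∈ Finset.Ico (i + 1) r, (α - β - j)) * hchoose

lemma poly_succ_term (u x c : ℝ) {r i : ℕ} (hi : i ≤ r) :
    x * (x + u) * (c * u ^ i * ((r - i : ℕ) * x ^ (r - i - 1)))
        + ((α - r) * (x + u) - (β + r) * x) * (c * u ^ i * x ^ (r - i))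
      = (α - β - r - i) * c * u ^ i * x ^ (r + 1 - i)
        + (α - i) * c * u ^ (i + 1) * x ^ (r - i) := by
  obtain ⟨n, rfl⟩ := Nat.exists_eq_add_of_le hi
  rw [add_assoc, Nat.add_sub_cancel_left, Nat.add_sub_cancel_left]
  cases n <;> push_cast <;> ring

lemma hasDerivAt_poly (u x : ℝ) (r : ℕ) :
    HasDerivAt (poly α β u r)
      (∑ i ∈ Finset.range (r + 1),
        coeff α β r i * u ^ i * ((r - i : ℕ) * x ^ (r - i - 1))) x := by
  unfold poly
  refine HasDerivAt.fun_sum fun i _ ↦ ?_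
  simpa [mul_assoc] using (hasDerivAt_pow (r - i) x).const_mul (coeff α β r i * u ^ i)

lemma poly_succ (u x : ℝ) (r : ℕ) :
    x * (x + u) * deriv (poly α β u r) x
        + ((α - r) * (x + u) - (β + r) * x) * poly α β u r x = poly α β u (r + 1) x := by
  rw [(hasDerivAt_poly u x r).deriv, poly, poly, Finset.mul_sum, Finset.mul_sum, ← Finset.sum_add_distrib,
    Finset.sum_congr rfl fun i hi ↦ poly_succ_term u x _ (Finset.mem_range_succ_iff.mp hi),
    Finset.sum_add_distrib]
  set A : ℕ → ℝ := fun i ↦ (α - β - r - i) * coeff α β r i * u ^ i * x ^ (r + 1 - i)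
  have hA : ∑ i ∈ Finset.range (r + 1), A i = ∑ i ∈ Finset.range (r + 2), A i := by
    simp [Finset.sum_range_succ _ (r + 1), A, coeff_of_lt (lt_add_one r)]
  rw [hA, Finset.sum_range_succ' A, Finset.sum_range_succ' _ (r + 1), add_right_comm,
    ← Finset.sum_add_distrib]
  congr 1
  · refine Finset.sum_congr rfl fun i hi ↦ ?_
    simp only [A, coeff_succ_succ (Finset.mem_range_succ_iff.mp hi), Nat.add_sub_add_right]
    push_cast
    ring
  · simp [A, coeff_succ_zero]

lemma hasDerivAt_rpow_mul_rpow_mul_poly {u x : ℝ} (hx : x ≠ 0) (hxu : x + u ≠ 0) (r : ℕ) :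
    HasDerivAt (fun y ↦ y ^ (α - r) * (y + u) ^ (-(β + r)) * poly α β u r y)
      (x ^ (α - (r + 1)) * (x + u) ^ (-(β + (r + 1))) * poly α β u (r + 1) x) x := by
  have hpow : HasDerivAt (fun y ↦ y ^ (α - r)) ((α - r) * x ^ (α - r - 1)) x :=
    Real.hasDerivAt_rpow_const (Or.inl hx)
  have hshift :
      HasDerivAt (fun y ↦ (y + u) ^ (-(β + r))) (-(β + r) * (x + u) ^ (-(β + r) - 1)) x := by
    simpa using ((hasDerivAt_id x).add_const u).rpow_const (p := -(β + r)) (Or.inl hxu)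
  refine ((hpow.fun_mul hshift).fun_mul (hasDerivAt_poly u x r)).congr_deriv ?_
  have hx' : x ^ (α - r) = x ^ (α - (r + 1)) * x := by rw [← Real.rpow_add_one hx]; ring_nf
  have hxu' : (x + u) ^ (-(β + r)) = (x + u) ^ (-(β + (r + 1))) * (x + u) := by
    rw [← Real.rpow_add_one hxu]; ring_nf
  rw [← poly_succ, (hasDerivAt_poly u x r).deriv, sub_sub,
    show -(β + r) - 1 = -(β + (r + 1)) by ring, hx', hxu']
  ring

theorem iteratedDeriv_rpow_mul_rpow {u x : ℝ} (hx : x ≠ 0) (hxu : x + u ≠ 0) (r : ℕ) :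
    iteratedDeriv r (fun y ↦ y ^ α * (y + u) ^ (-β)) x =
      x ^ (α - r) * (x + u) ^ (-(β + r)) * poly α β u r x := by
  induction r generalizing x with
  | zero => simp [poly, coeff]
  | succ r ih =>
    have hnear : ∀ᶠ y in 𝓝 x, y ≠ 0 ∧ y + u ≠ 0 :=
      (eventually_ne_nhds hx).and ((continuous_add_const u).continuousAt.eventually_ne hxu)
    rw [iteratedDeriv_succ, Filter.EventuallyEq.deriv_eq (hnear.mono fun y hy ↦ ih hy.1 hy.2)]
    exact_mod_cast (hasDerivAt_rpow_mul_rpow_mul_poly hx hxu r).deriv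

end RpowMulRpow

open RpowMulRpow in
theorem stmt_5 (α β u : ℝ) (hu : 0 < u) (r : ℕ) (x : ℝ) (hx : 0 < x) :
    iteratedDeriv r (fun y : ℝ => y ^ α * (y + u) ^ (-β)) x =
      x ^ (α - r) * (x + u) ^ (-(β + r)) *
        ∑ i ∈ Finset.range (r + 1),
          (r.choose i : ℝ) * u ^ i * x ^ (r - i) *
            (∏ j ∈ Finset.range i, (α - j)) *
            (∏ j ∈ Finset.Ico i r, (α - β - j)) := by
  rw [iteratedDeriv_rpow_mul_rpow hx.ne' (by positivity), poly]
  congr 1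
  refine Finset.sum_congr rfl fun i _ ↦ ?_
  rw [coeff]
  ring
end

section
/- Let k ≥ 0 be an integer and let q be a real number with k < q < k + 1. Then for every x > 0, x^q = (sin((q − k)π)/π) · ∫₀^∞ t^{q−k−1} x^{k+1} (x + t)^{−1} dt, where the integral is a convergent improper Riemann (Lebesgue) integral over (0, ∞). -/
open Matrix Filter Set Topology

/-!
With `a = q - k`, the substitution `t = x s` reduces the integral to
`x ^ (a - 1) * ∫₀^∞ s ^ (a - 1) / (1 + s) ds`, and the substitution `s = u / (1 - u)` turns the
latter into the Beta integral `B(a, 1 - a) = Γ(a) Γ(1 - a) = π / sin (π a)` (Euler's reflection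
formula). Multiplying by `x ^ (k + 1)` gives `x ^ q * π / sin (π a)`.
-/

open MeasureTheory Real

section DivOneSub

variable {E : Type*} [NormedAddCommGroup E] [NormedSpace ℝ E]

lemma hasDerivAt_div_one_sub {u : ℝ} (hu : u ≠ 1) :
    HasDerivAt (fun u : ℝ => u / (1 - u)) ((1 - u) ^ 2)⁻¹ u := by
  have h : 1 - u ≠ 0 := sub_ne_zero.2 hu.symm
  refine ((hasDerivAt_id' u).div ((hasDerivAt_const u 1).sub (hasDerivAt_id' u)) h).congr_deriv ?_
  simp only [Pi.sub_apply]
  ring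

lemma injOn_div_one_sub : InjOn (fun u : ℝ => u / (1 - u)) (Iio 1) := by
  intro u hu v hv huv
  have hu' : 1 - u ≠ 0 := (sub_pos.2 hu).ne'
  have hv' : 1 - v ≠ 0 := (sub_pos.2 hv).ne'
  rw [div_eq_div_iff hu' hv'] at huv
  linarith

lemma image_div_one_sub_Ioo : (fun u : ℝ => u / (1 - u)) '' Ioo 0 1 = Ioi 0 := by
  ext t
  constructor
  · rintro ⟨u, ⟨hu0, hu1⟩, rfl⟩
    exact div_pos hu0 (sub_pos.2 hu1)
  · intro (ht : 0 < t)
    refine ⟨t / (1 + t), ⟨by positivity, (div_lt_one (by positivity)).2 (by linarith)⟩, ?_⟩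
    field_simp
    ring

lemma integrableOn_Ioi_iff_comp_div_one_sub {g : ℝ → E} :
    IntegrableOn g (Ioi 0) ↔
      IntegrableOn (fun u => ((1 - u) ^ 2)⁻¹ • g (u / (1 - u))) (Ioo 0 1) := by
  rw [← image_div_one_sub_Ioo, integrableOn_image_iff_integrableOn_abs_deriv_smul measurableSet_Ioo
    (fun u hu => (hasDerivAt_div_one_sub hu.2.ne).hasDerivWithinAt)
    (injOn_div_one_sub.mono Ioo_subset_Iio_self)]
  refine integrableOn_congr_fun (fun u _ => ?_) measurableSet_Ioo
  rw [abs_of_nonneg (by positivity)]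

lemma integral_Ioi_eq_integral_comp_div_one_sub (g : ℝ → E) :
    ∫ t in Ioi 0, g t = ∫ u in Ioo 0 1, ((1 - u) ^ 2)⁻¹ • g (u / (1 - u)) := by
  rw [← image_div_one_sub_Ioo, integral_image_eq_integral_abs_deriv_smul measurableSet_Ioo
    (fun u hu => (hasDerivAt_div_one_sub hu.2.ne).hasDerivWithinAt)
    (injOn_div_one_sub.mono Ioo_subset_Iio_self)]
  refine setIntegral_congr_fun measurableSet_Ioo (fun u _ => ?_)
  rw [abs_of_nonneg (by positivity)]

end DivOneSub

lemma ofReal_rpow_mul_one_sub_rpow {u : ℝ} (hu : u ∈ Icc (0 : ℝ) 1) (p r : ℝ) :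
    ((u ^ (p - 1) * (1 - u) ^ (r - 1) : ℝ) : ℂ) =
      (u : ℂ) ^ ((p : ℂ) - 1) * (1 - (u : ℂ)) ^ ((r : ℂ) - 1) := by
  rw [Complex.ofReal_mul, Complex.ofReal_cpow hu.1, Complex.ofReal_cpow (sub_nonneg.2 hu.2)]
  push_cast
  rfl

lemma intervalIntegrable_rpow_mul_one_sub_rpow {p r : ℝ} (hp : 0 < p) (hr : 0 < r) :
    IntervalIntegrable (fun u : ℝ => u ^ (p - 1) * (1 - u) ^ (r - 1)) volume 0 1 := by
  have hF := Complex.betaIntegral_convergent (u := p) (v := r) (by simpa) (by simpa)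
  have hReal : IntervalIntegrable (fun u : ℝ => ((u ^ (p - 1) * (1 - u) ^ (r - 1) : ℝ) : ℂ))
      volume 0 1 := hF.congr fun u hu => (ofReal_rpow_mul_one_sub_rpow
        (Ioc_subset_Icc_self (by rwa [uIoc_of_le zero_le_one] at hu)) p r).symm
  refine hReal.norm.congr fun u hu => ?_
  rw [uIoc_of_le zero_le_one] at hu
  have : 0 ≤ 1 - u := sub_nonneg.2 hu.2
  have : 0 ≤ u := hu.1.le
  rw [Complex.norm_real, norm_of_nonneg (by positivity)]

lemma integral_rpow_mul_one_sub_rpow {p r : ℝ} (hp : 0 < p) (hr : 0 < r) :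
    ∫ u in (0 : ℝ)..1, u ^ (p - 1) * (1 - u) ^ (r - 1) = Gamma p * Gamma r / Gamma (p + r) := by
  have hΓ := Complex.Gamma_mul_Gamma_eq_betaIntegral (s := p) (t := r) (by simpa) (by simpa)
  have hne : Gamma (p + r) ≠ 0 := (Gamma_pos_of_pos (by positivity)).ne'
  apply Complex.ofReal_injective
  rw [← intervalIntegral.integral_ofReal, intervalIntegral.integral_congr fun u hu =>
    ofReal_rpow_mul_one_sub_rpow (by rwa [uIcc_of_le zero_le_one] at hu) p r]
  rw [← Complex.ofReal_add] at hΓ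
  simp only [Complex.Gamma_ofReal] at hΓ
  rw [Complex.ofReal_div, Complex.ofReal_mul, hΓ, Complex.betaIntegral]
  field_simp [Complex.ofReal_ne_zero.2 hne]

lemma rpow_mul_one_add_inv_comp_div_one_sub {a u : ℝ} (hu : u ∈ Ioo (0 : ℝ) 1) :
    ((1 - u) ^ 2)⁻¹ * ((u / (1 - u)) ^ (a - 1) * (1 + u / (1 - u))⁻¹) =
      u ^ (a - 1) * (1 - u) ^ ((1 - a) - 1) := by
  have h1 : 0 < 1 - u := sub_pos.2 hu.2
  have hsum : 1 + u / (1 - u) = (1 - u)⁻¹ := by field_simp; ring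
  rw [hsum, div_rpow hu.1.le h1.le, show (1 - a) - 1 = -(a - 1) + -1 by ring,
    rpow_add h1, rpow_neg h1.le, rpow_neg_one]
  field_simp

lemma integrableOn_rpow_mul_one_add_inv {a : ℝ} (ha0 : 0 < a) (ha1 : a < 1) :
    IntegrableOn (fun t : ℝ => t ^ (a - 1) * (1 + t)⁻¹) (Ioi 0) := by
  rw [integrableOn_Ioi_iff_comp_div_one_sub]
  refine (integrableOn_congr_fun (fun u hu => ?_) measurableSet_Ioo).2
    ((intervalIntegrable_iff_integrableOn_Ioo_of_le zero_le_one).1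
      (intervalIntegrable_rpow_mul_one_sub_rpow ha0 (sub_pos.2 ha1)))
  rw [smul_eq_mul, rpow_mul_one_add_inv_comp_div_one_sub hu]

lemma integral_rpow_mul_one_add_inv {a : ℝ} (ha0 : 0 < a) (ha1 : a < 1) :
    ∫ t in Ioi 0, t ^ (a - 1) * (1 + t)⁻¹ = π / sin (π * a) := by
  rw [integral_Ioi_eq_integral_comp_div_one_sub,
    setIntegral_congr_fun measurableSet_Ioo fun u hu => by
      rw [smul_eq_mul, rpow_mul_one_add_inv_comp_div_one_sub hu],
    ← integral_Ioc_eq_integral_Ioo, ← intervalIntegral.integral_of_le zero_le_one,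
    integral_rpow_mul_one_sub_rpow ha0 (sub_pos.2 ha1), add_sub_cancel, Gamma_one, div_one,
    Gamma_mul_Gamma_one_sub]

lemma rpow_mul_add_inv_comp_mul {a x s : ℝ} (hx : 0 < x) (hs : 0 ≤ s) :
    (x * s) ^ (a - 1) * (x + x * s)⁻¹ = x ^ (a - 1) * x⁻¹ * (s ^ (a - 1) * (1 + s)⁻¹) := by
  rw [mul_rpow hx.le hs, show x + x * s = x * (1 + s) by ring, mul_inv]
  ring

lemma integrableOn_rpow_mul_add_inv {a x : ℝ} (hx : 0 < x) (ha0 : 0 < a) (ha1 : a < 1) :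
    IntegrableOn (fun t : ℝ => t ^ (a - 1) * (x + t)⁻¹) (Ioi 0) := by
  rw [← mul_zero x, ← integrableOn_Ioi_comp_mul_left_iff _ _ hx]
  refine (integrableOn_congr_fun (fun s hs => ?_) measurableSet_Ioi).2
    ((integrableOn_rpow_mul_one_add_inv ha0 ha1).const_mul (x ^ (a - 1) * x⁻¹))
  exact rpow_mul_add_inv_comp_mul hx hs.le

lemma integral_rpow_mul_add_inv {a x : ℝ} (hx : 0 < x) (ha0 : 0 < a) (ha1 : a < 1) :
    ∫ t in Ioi 0, t ^ (a - 1) * (x + t)⁻¹ = x ^ (a - 1) * (π / sin (π * a)) := by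
  have hscale := integral_comp_mul_left_Ioi (fun t => t ^ (a - 1) * (x + t)⁻¹) 0 hx
  rw [mul_zero, setIntegral_congr_fun measurableSet_Ioi fun s (hs : 0 < s) =>
    rpow_mul_add_inv_comp_mul hx hs.le, integral_const_mul, integral_rpow_mul_one_add_inv ha0 ha1,
    smul_eq_mul, eq_inv_mul_iff_mul_eq₀ hx.ne'] at hscale
  rw [← hscale]
  field_simp

theorem stmt_12 (k : ℕ) (q : ℝ) (hq1 : (k : ℝ) < q) (hq2 : q < k + 1)
    (x : ℝ) (hx : 0 < x) :
    MeasureTheory.IntegrableOn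
      (fun t : ℝ => t ^ (q - k - 1) * x ^ (k + 1) * (x + t)⁻¹) (Set.Ioi 0) ∧
    x ^ q = (Real.sin ((q - k) * Real.pi) / Real.pi) *
      ∫ t in Set.Ioi (0 : ℝ), t ^ (q - k - 1) * x ^ (k + 1) * (x + t)⁻¹ := by
  have ha0 : 0 < q - k := sub_pos.2 hq1
  have ha1 : q - k < 1 := by linarith
  have hsin : 0 < sin ((q - k) * π) :=
    sin_pos_of_pos_of_lt_pi (mul_pos ha0 pi_pos) (by nlinarith [pi_pos])
  have hintegrand : (fun t : ℝ => t ^ (q - k - 1) * x ^ (k + 1) * (x + t)⁻¹) =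
      fun t => x ^ (k + 1) * (t ^ (q - k - 1) * (x + t)⁻¹) := by
    ext t; ring
  refine ⟨hintegrand ▸ (integrableOn_rpow_mul_add_inv hx ha0 ha1).const_mul _, ?_⟩
  rw [hintegrand, integral_const_mul, integral_rpow_mul_add_inv hx ha0 ha1, mul_comm π]
  have hpow : x ^ q = x ^ (k + 1) * x ^ (q - k - 1) := by
    rw [← rpow_natCast, ← rpow_add hx]
    push_cast
    ring_nf
  rw [hpow]
  field_simp [hsin.ne']
end

section
/- Let A = (a_{ij}) be a 3×3 doubly nonnegative matrix and let u > 0. Then the (1,2) entry of A² (A + u I)^{−1} equals det(A + uI)^{−1} · ( a₁₂ det A + a₁₂ u (C₁₁ + C₂₂ + C₃₃) + u² (a₁₂ a₁₁ + a₁₂ a₂₂ + a₁₃ a₂₃) ), where C_{ii} denotes the principal 2×2 minor of A obtained by deleting row i and column i; in particular this entry is nonnegative. -/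
open Matrix Filter Set Topology

open scoped ComplexOrder in
theorem Matrix.PosSemidef.mul_sub_mul_nonneg {n 𝕜 : Type*} [Fintype n] [RCLike 𝕜]
    {A : Matrix n n 𝕜} (hA : A.PosSemidef) (i j : n) :
    0 ≤ A i i * A j j - A i j * A j i := by
  have h := (hA.submatrix ![i, j]).det_nonneg
  rwa [det_fin_two] at h

theorem Matrix.PosSemidef.add_smul_one {n : Type*} [Fintype n] [DecidableEq n]
    {A : Matrix n n ℝ} (hA : A.PosSemidef) {u : ℝ} (hu : 0 ≤ u) :
    (A + u • (1 : Matrix n n ℝ)).PosSemidef :=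
  hA.add (PosSemidef.one.smul hu)

/-- Both sides are the junk value `0` when `A + u • 1` is singular
(`Ring.inverse 0 = 0 = 0⁻¹`). -/
theorem Matrix.sq_mul_inv_add_smul_one_apply_zero_one {K : Type*} [Field K]
    {A : Matrix (Fin 3) (Fin 3) K} (hA : A.IsSymm) (u : K) :
    (A ^ 2 * (A + u • (1 : Matrix (Fin 3) (Fin 3) K))⁻¹) 0 1 =
      ((A + u • (1 : Matrix (Fin 3) (Fin 3) K)).det)⁻¹ *
        (A 0 1 * A.det +
          A 0 1 * u *
            ((A 1 1 * A 2 2 - A 1 2 * A 2 1) +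
             (A 0 0 * A 2 2 - A 0 2 * A 2 0) +
             (A 0 0 * A 1 1 - A 0 1 * A 1 0)) +
          u ^ 2 * (A 0 1 * A 0 0 + A 0 1 * A 1 1 + A 0 2 * A 1 2)) := by
  rw [inv_def, Ring.inverse_eq_inv', Matrix.mul_smul, smul_apply, smul_eq_mul]
  congr 1
  simp [pow_two, mul_apply, Fin.sum_univ_three, adjugate_fin_three, det_fin_three,
    hA.apply 0 1, hA.apply 0 2, hA.apply 1 2]
  ring

theorem stmt_16 (A : Matrix (Fin 3) (Fin 3) ℝ) (hA : DN A) (u : ℝ) (hu : 0 < u) :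
    (A ^ 2 * (A + u • (1 : Matrix (Fin 3) (Fin 3) ℝ))⁻¹) 0 1 =
      ((A + u • (1 : Matrix (Fin 3) (Fin 3) ℝ)).det)⁻¹ *
        (A 0 1 * A.det +
          A 0 1 * u *
            ((A 1 1 * A 2 2 - A 1 2 * A 2 1) +
             (A 0 0 * A 2 2 - A 0 2 * A 2 0) +
             (A 0 0 * A 1 1 - A 0 1 * A 1 0)) +
          u ^ 2 * (A 0 1 * A 0 0 + A 0 1 * A 1 1 + A 0 2 * A 1 2)) ∧
    0 ≤ (A ^ 2 * (A + u • (1 : Matrix (Fin 3) (Fin 3) ℝ))⁻¹) 0 1 := by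
  obtain ⟨hpsd, hnn⟩ := hA
  have hformula :=
    sq_mul_inv_add_smul_one_apply_zero_one (isHermitian_iff_isSymm.mp hpsd.isHermitian) u
  refine ⟨hformula, hformula ▸ ?_⟩
  have hminors := add_nonneg (add_nonneg (hpsd.mul_sub_mul_nonneg 1 2)
    (hpsd.mul_sub_mul_nonneg 0 2)) (hpsd.mul_sub_mul_nonneg 0 1)
  refine mul_nonneg (inv_nonneg.2 (hpsd.add_smul_one hu.le).det_nonneg)
    (add_nonneg (add_nonneg ?_ ?_) ?_)
  · exact mul_nonneg (hnn 0 1) hpsd.det_nonneg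
  · exact mul_nonneg (mul_nonneg (hnn 0 1) hu.le) hminors
  · have := hnn 0 0; have := hnn 0 1; have := hnn 0 2; have := hnn 1 1; have := hnn 1 2
    positivity
end

section
/- Let u > 0, β < 0, and let α ∈ (m, m+1) for some nonnegative integer m. Then there exists x > 0 such that the (m+2)-th derivative of the function x ↦ x^α (x + u)^{−β} is strictly negative at x; indeed this derivative is negative for all sufficiently small x > 0. -/
open Matrix Filter Set Topology

/-! By Leibniz's rule, for `x > 0` the `n`-th derivative of `x ^ p * (x + u) ^ q` is
`x ^ (p - n) * h x` with `h` continuous at `0` and `h 0 = p (p - 1) ⋯ (p - n + 1) * u ^ q`: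
every other Leibniz term carries a positive integer power of `x`. For `n = m + 2` and
`m < p < m + 1` exactly one factor `p - (m + 1)` of this falling factorial is negative, so the
derivative is negative near `0⁺`. -/

theorem iteratedDeriv_rpow_const (p x : ℝ) (n : ℕ) :
    iteratedDeriv n (fun y : ℝ => y ^ p) x = (descPochhammer ℝ n).eval p * x ^ (p - n) := by
  rw [iteratedDeriv_eq_iterate, Real.iter_deriv_rpow_const]

theorem iteratedDeriv_add_const_rpow (u q x : ℝ) (n : ℕ) :
    iteratedDeriv n (fun y : ℝ => (y + u) ^ q) x
      = (descPochhammer ℝ n).eval q * (x + u) ^ (q - n) := by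
  rw [iteratedDeriv_comp_add_const n (fun y : ℝ => y ^ q)]
  exact iteratedDeriv_rpow_const q (x + u) n

section

variable {u p q x : ℝ}

theorem iteratedDeriv_rpow_mul_add_rpow (hu : 0 < u) (hx : 0 < x) (n : ℕ) :
    iteratedDeriv n (fun y : ℝ => y ^ p * (y + u) ^ q) x
      = x ^ (p - n) * ∑ i ∈ Finset.range (n + 1), n.choose i * (descPochhammer ℝ i).eval p *
          (descPochhammer ℝ (n - i)).eval q * x ^ (n - i) * (x + u) ^ (q - (n - i : ℕ)) := by
  have hf : ContDiffAt ℝ n (fun y : ℝ => y ^ p) x := Real.contDiffAt_rpow_const (Or.inl hx.ne')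
  have hg : ContDiffAt ℝ n (fun y : ℝ => (y + u) ^ q) x :=
    (contDiffAt_id.add contDiffAt_const).rpow_const_of_ne (add_pos hx hu).ne'
  rw [iteratedDeriv_fun_mul hf hg, Finset.mul_sum]
  refine Finset.sum_congr rfl fun i hi => ?_
  have hin : i ≤ n := Nat.lt_succ_iff.mp (Finset.mem_range.mp hi)
  have hpow : x ^ (p - i) = x ^ (p - n) * x ^ (n - i) := by
    rw [← Real.rpow_natCast, ← Real.rpow_add hx, Nat.cast_sub hin]
    ring_nf
  rw [iteratedDeriv_rpow_const, iteratedDeriv_add_const_rpow, hpow]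
  ring

theorem tendsto_rpow_mul_iteratedDeriv_rpow_mul_add_rpow (hu : 0 < u) (n : ℕ) :
    Tendsto (fun x : ℝ => x ^ ((n : ℝ) - p) * iteratedDeriv n (fun y : ℝ => y ^ p * (y + u) ^ q) x)
      (𝓝[>] 0) (𝓝 ((descPochhammer ℝ n).eval p * u ^ q)) := by
  set h : ℝ → ℝ := fun x => ∑ i ∈ Finset.range (n + 1), n.choose i * (descPochhammer ℝ i).eval p *
    (descPochhammer ℝ (n - i)).eval q * x ^ (n - i) * (x + u) ^ (q - (n - i : ℕ))
  have hcont : ContinuousAt h 0 := by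
    refine tendsto_finsetSum _ fun i _ => ?_
    exact (continuousAt_const.mul (continuousAt_id.pow _)).mul
      ((continuousAt_id.add continuousAt_const).rpow_const (Or.inl (by simpa using hu.ne')))
  have h0 : h 0 = (descPochhammer ℝ n).eval p * u ^ q := by
    dsimp only [h]
    rw [Finset.sum_range_succ, Finset.sum_eq_zero fun i hi => ?_]
    · simp
    · have : n - i ≠ 0 := by have := Finset.mem_range.mp hi; omega
      simp [zero_pow this]
  have hlim : Tendsto h (𝓝[>] 0) (𝓝 ((descPochhammer ℝ n).eval p * u ^ q)) :=
    h0 ▸ hcont.tendsto.mono_left nhdsWithin_le_nhds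
  refine hlim.congr' ?_
  filter_upwards [self_mem_nhdsWithin] with x (hx : 0 < x)
  rw [iteratedDeriv_rpow_mul_add_rpow hu hx, ← mul_assoc, ← Real.rpow_add hx]
  simp [h]

end

theorem descPochhammer_eval_neg {m : ℕ} {α : ℝ} (h1 : (m : ℝ) < α) (h2 : α < m + 1) :
    (descPochhammer ℝ (m + 2)).eval α < 0 := by
  rw [descPochhammer_succ_eval]
  refine mul_neg_of_pos_of_neg (descPochhammer_pos ?_) ?_ <;> push_cast <;> linarith

theorem stmt_18_general (u β : ℝ) (hu : 0 < u) (m : ℕ) (α : ℝ)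
    (h1 : (m : ℝ) < α) (h2 : α < m + 1) :
    (∃ x : ℝ, 0 < x ∧
      iteratedDeriv (m + 2) (fun y : ℝ => y ^ α * (y + u) ^ (-β)) x < 0) ∧
    ∃ δ : ℝ, 0 < δ ∧ ∀ x : ℝ, 0 < x → x < δ →
      iteratedDeriv (m + 2) (fun y : ℝ => y ^ α * (y + u) ^ (-β)) x < 0 := by
  have hlim := tendsto_rpow_mul_iteratedDeriv_rpow_mul_add_rpow (p := α) (q := -β) hu (m + 2)
  have hneg : ∀ᶠ x in 𝓝[>] 0,
      iteratedDeriv (m + 2) (fun y : ℝ => y ^ α * (y + u) ^ (-β)) x < 0 := by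
    filter_upwards [hlim.eventually (gt_mem_nhds
      (mul_neg_of_neg_of_pos (descPochhammer_eval_neg h1 h2) (Real.rpow_pos_of_pos hu _))),
      self_mem_nhdsWithin] with x hx (hx0 : 0 < x)
    exact neg_of_mul_neg_right hx (Real.rpow_nonneg hx0.le _)
  obtain ⟨δ, hδ, hsub⟩ := mem_nhdsGT_iff_exists_Ioo_subset.mp hneg
  exact ⟨(hneg.and self_mem_nhdsWithin).exists.imp fun x hx => ⟨hx.2, hx.1⟩,
    δ, hδ, fun x hx hxδ => hsub ⟨hx, hxδ⟩⟩

theorem stmt_18 (u β : ℝ) (hu : 0 < u) (hβ : β < 0) (m : ℕ) (α : ℝ)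
    (h1 : (m : ℝ) < α) (h2 : α < m + 1) :
    (∃ x : ℝ, 0 < x ∧
      iteratedDeriv (m + 2) (fun y : ℝ => y ^ α * (y + u) ^ (-β)) x < 0) ∧
    ∃ δ : ℝ, 0 < δ ∧ ∀ x : ℝ, 0 < x → x < δ →
      iteratedDeriv (m + 2) (fun y : ℝ => y ^ α * (y + u) ^ (-β)) x < 0 :=
  stmt_18_general u β hu m α h1 h2
end

section
/- Let u > 0, β ≥ 0, and suppose α − β ∈ (m, m+1) for some nonnegative integer m, with α ≥ 0. Then there exists x > 0 such that the (m+2)-th derivative of the function x ↦ x^α (x + u)^{−β} is strictly negative at x; indeed this derivative is negative for all sufficiently large x. -/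
open Matrix Filter Set Topology

/-!
Every derivative of `x ↦ x^α (x+u)^(-β)` is a finite sum of terms `c x^(γ-b) (x+u)^b`
of the same total degree `γ`, and differentiating maps a term of degree `γ` to two terms of
degree `γ - 1` whose coefficients add up to `γ c`. Hence the `n`-th derivative has degree
`α - β - n` and total coefficient `∏_{j<n} (α - β - j)`, which is negative for `n = m + 2`.
As `x → ∞` each term is `c x^γ (1 + o(1))`, so the sum has the sign of its total coefficient.
-/

section RpowSum

variable {ι : Type} [Fintype ι]

noncomputable def rpowSum (u γ : ℝ) (c b : ι → ℝ) (x : ℝ) : ℝ :=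
  ∑ i, c i * x ^ (γ - b i) * (x + u) ^ b i

theorem hasDerivAt_rpowSum {u x : ℝ} (hu : 0 ≤ u) (hx : 0 < x) (γ : ℝ) (c b : ι → ℝ) :
    HasDerivAt (rpowSum u γ c b)
      (rpowSum u (γ - 1) (Sum.elim (fun i => c i * (γ - b i)) (fun i => c i * b i))
        (Sum.elim b (fun i => b i - 1)) x) x := by
  have hterm : ∀ i, HasDerivAt (fun y : ℝ => c i * y ^ (γ - b i) * (y + u) ^ b i)
      (c i * (γ - b i) * x ^ (γ - 1 - b i) * (x + u) ^ b i
        + c i * b i * x ^ (γ - 1 - (b i - 1)) * (x + u) ^ (b i - 1)) x := by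
    intro i
    have hpow : HasDerivAt (fun y : ℝ => y ^ (γ - b i)) ((γ - b i) * x ^ (γ - b i - 1)) x :=
      Real.hasDerivAt_rpow_const (Or.inl hx.ne')
    have hshift : HasDerivAt (fun y : ℝ => (y + u) ^ b i) (b i * (x + u) ^ (b i - 1)) x := by
      simpa using ((hasDerivAt_id x).add_const u).rpow_const (p := b i) (Or.inl (by positivity))
    refine ((hpow.const_mul (c i)).fun_mul hshift).congr_deriv ?_
    rw [sub_right_comm, sub_sub_sub_cancel_right]
    ring
  unfold rpowSum
  rw [Fintype.sum_sum_type, ← Finset.sum_add_distrib]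
  exact HasDerivAt.fun_sum fun i _ => hterm i

theorem exists_iteratedDeriv_eqOn_rpowSum {u : ℝ} (hu : 0 ≤ u) (γ : ℝ) (c b : ι → ℝ) (n : ℕ) :
    ∃ (κ : Type) (_ : Fintype κ) (c' b' : κ → ℝ),
      ∑ k, c' k = (∏ j ∈ Finset.range n, (γ - j)) * ∑ i, c i ∧
      EqOn (iteratedDeriv n (rpowSum u γ c b)) (rpowSum u (γ - n) c' b') (Ioi 0) := by
  induction n with
  | zero => exact ⟨ι, inferInstance, c, b, by simp, by simp [EqOn]⟩
  | succ n ih =>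
    obtain ⟨κ, _, c', b', hsum, heq⟩ := ih
    refine ⟨κ ⊕ κ, inferInstance, Sum.elim (fun k => c' k * (γ - n - b' k)) (fun k => c' k * b' k),
      Sum.elim b' (fun k => b' k - 1), ?_, fun x (hx : 0 < x) => ?_⟩
    · have hsplit : ∀ k, c' k * (γ - n - b' k) + c' k * b' k = (γ - n) * c' k := fun k => by ring
      simp only [Fintype.sum_sum_type, Sum.elim_inl, Sum.elim_inr]
      rw [← Finset.sum_add_distrib, Finset.sum_congr rfl fun k _ => hsplit k, ← Finset.mul_sum,
        hsum, Finset.prod_range_succ]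
      ring
    · have hlocal : iteratedDeriv n (rpowSum u γ c b) =ᶠ[𝓝 x] rpowSum u (γ - n) c' b' :=
        eventuallyEq_of_mem (Ioi_mem_nhds hx) heq
      rw [iteratedDeriv_succ, hlocal.deriv_eq, (hasDerivAt_rpowSum hu hx _ c' b').deriv]
      push_cast
      rw [sub_sub]

theorem tendsto_rpowSum_div_rpow_atTop (u γ : ℝ) (c b : ι → ℝ) :
    Tendsto (fun x => rpowSum u γ c b x / x ^ γ) atTop (𝓝 (∑ i, c i)) := by
  have hratio : Tendsto (fun x : ℝ => (x + u) / x) atTop (𝓝 1) := by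
    have hinv : Tendsto (fun x : ℝ => 1 + u / x) atTop (𝓝 (1 + 0)) :=
      tendsto_const_nhds.add (tendsto_const_nhds.div_atTop tendsto_id)
    refine (tendsto_congr' ?_).mp (by simpa using hinv)
    filter_upwards [eventually_gt_atTop 0] with x hx
    field_simp
  have hnormalized : Tendsto (fun x : ℝ => ∑ i, c i * ((x + u) / x) ^ b i) atTop
      (𝓝 (∑ i, c i * 1 ^ b i)) :=
    tendsto_finsetSum _ fun i _ => tendsto_const_nhds.mul <|
      ((Real.continuousAt_rpow_const 1 (b i) (Or.inl one_ne_zero)).tendsto).comp hratio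
  simp only [Real.one_rpow, mul_one] at hnormalized
  refine (tendsto_congr' ?_).mp hnormalized
  filter_upwards [eventually_gt_atTop 0, eventually_gt_atTop (-u)] with x hx hxu
  rw [rpowSum, Finset.sum_div]
  refine Finset.sum_congr rfl fun i _ => ?_
  rw [Real.div_rpow (by linarith) hx.le, Real.rpow_sub hx]
  field_simp

theorem eventually_rpowSum_neg (u γ : ℝ) {c : ι → ℝ} (b : ι → ℝ) (hc : ∑ i, c i < 0) :
    ∀ᶠ x in atTop, rpowSum u γ c b x < 0 := by
  filter_upwards [(tendsto_rpowSum_div_rpow_atTop u γ c b).eventually_lt_const hc,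
    eventually_gt_atTop 0] with x hneg hx
  exact neg_of_div_neg_left hneg (Real.rpow_nonneg hx.le γ)

end RpowSum

theorem prod_range_sub_natCast_neg {γ : ℝ} {m : ℕ} (h1 : (m : ℝ) < γ) (h2 : γ < m + 1) :
    ∏ j ∈ Finset.range (m + 2), (γ - j) < 0 := by
  rw [Finset.prod_range_succ]
  refine mul_neg_of_pos_of_neg (Finset.prod_pos fun j hj => ?_) (by push_cast; linarith)
  have hj : (j : ℝ) ≤ m := by exact_mod_cast Nat.lt_succ_iff.mp (Finset.mem_range.mp hj)
  linarith

theorem stmt_19_general (u β : ℝ) (hu : 0 < u) (m : ℕ) (α : ℝ)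
    (h1 : (m : ℝ) < α - β) (h2 : α - β < m + 1) :
    (∃ x : ℝ, 0 < x ∧
      iteratedDeriv (m + 2) (fun y : ℝ => y ^ α * (y + u) ^ (-β)) x < 0) ∧
    ∃ X : ℝ, ∀ x : ℝ, X < x →
      iteratedDeriv (m + 2) (fun y : ℝ => y ^ α * (y + u) ^ (-β)) x < 0 := by
  have hf : (fun y : ℝ => y ^ α * (y + u) ^ (-β))
      = rpowSum u (α - β) (fun _ : Unit => 1) (fun _ => -β) := by
    ext y
    simp [rpowSum]
  obtain ⟨κ, _, c, b, hsum, heq⟩ :=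
    exists_iteratedDeriv_eqOn_rpowSum hu.le (α - β) (fun _ : Unit => 1) (fun _ => -β) (m + 2)
  have hc : ∑ k, c k < 0 := by simpa [hsum] using prod_range_sub_natCast_neg h1 h2
  have hneg : ∀ᶠ x in atTop,
      iteratedDeriv (m + 2) (fun y : ℝ => y ^ α * (y + u) ^ (-β)) x < 0 := by
    filter_upwards [eventually_rpowSum_neg u _ b hc, eventually_gt_atTop 0] with x hx hpos
    rwa [hf, heq hpos]
  obtain ⟨X, hX⟩ := eventually_atTop.mp hneg
  exact ⟨⟨max X 0 + 1, by positivity, hX _ (by linarith [le_max_left X 0])⟩,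
    X, fun x hx => hX x hx.le⟩

theorem stmt_19 (u β : ℝ) (hu : 0 < u) (hβ : 0 ≤ β) (m : ℕ) (α : ℝ) (hα : 0 ≤ α)
    (h1 : (m : ℝ) < α - β) (h2 : α - β < m + 1) :
    (∃ x : ℝ, 0 < x ∧
      iteratedDeriv (m + 2) (fun y : ℝ => y ^ α * (y + u) ^ (-β)) x < 0) ∧
    ∃ X : ℝ, ∀ x : ℝ, X < x →
      iteratedDeriv (m + 2) (fun y : ℝ => y ^ α * (y + u) ^ (-β)) x < 0 :=
  stmt_19_general u β hu m α h1 h2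
end
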